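/- Let 0 ≤ α < 1 and let f(z) = z + a_2 z² + a_3 z³ + ⋯ be holomorphic on the unit disk D with f(z)/z ≠ 0 and f'(z) ≠ 0 on D ∖ {0}, and assume Re(f(z)/(z f'(z))) ≥ α for all z ∈ D ∖ {0} (i.e. f is almost starlike of order α). Then |2a_3 - 2a_2² + a_2²/(1-α)| ≤ 2(1-α). -/

import Mathlib

open Complex Metric

private lemma coeff_eq_iteratedDeriv {u : ℂ → ℂ} {p : FormalMultilinearSeries ℂ ℂ ℂ} {x : ℂ}
    (h : HasFPowerSeriesAt u p x) (n : ℕ) : p.coeff n = iteratedDeriv n u x / n.factorial := by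
  obtain ⟨r, hr⟩ := h
  have h2 := hr.factorial_smul (1 : ℂ) n
  have h3 : iteratedDeriv n u x = iteratedFDeriv ℂ n u x fun _ => 1 := rfl
  have h4 : p.coeff n = p n fun _ => 1 := rfl
  rw [h3, ← h2, h4, nsmul_eq_mul]
  rw [mul_div_cancel_left₀]
  exact_mod_cast n.factorial_ne_zero

set_option maxHeartbeats 2000000 in
theorem stmt_8 (α : ℝ) (hα0 : 0 ≤ α) (hα1 : α < 1)
    (f : ℂ → ℂ) (hf : DifferentiableOn ℂ f (ball (0:ℂ) 1))
    (h0 : f 0 = 0) (h1 : deriv f 0 = 1)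
    (hf' : ∀ z ∈ ball (0:ℂ) 1, deriv f z ≠ 0)
    (hfz : ∀ z ∈ ball (0:ℂ) 1, z ≠ 0 → f z ≠ 0)
    (a : ℕ → ℂ) (ha : ∀ n, a n = iteratedDeriv n f 0 / (Nat.factorial n))
    (hstar : ∀ z ∈ ball (0:ℂ) 1, z ≠ 0 → α ≤ (f z / (z * deriv f z)).re) :
    ‖2 * a 3 - 2 * a 2 ^ 2 + a 2 ^ 2 / (1 - (α:ℂ))‖ ≤ 2 * (1 - α) := by
  have h0mem : (0:ℂ) ∈ ball (0:ℂ) 1 := by simp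
  have hball : (ball (0:ℂ) 1) ∈ nhds (0:ℂ) := isOpen_ball.mem_nhds h0mem
  have han : AnalyticOnNhd ℂ f (ball 0 1) := hf.analyticOnNhd isOpen_ball
  set d1 := deriv f with hd1def
  have han1 : AnalyticOnNhd ℂ d1 (ball 0 1) := han.deriv
  set d2 := deriv d1 with hd2def
  have han2 : AnalyticOnNhd ℂ d2 (ball 0 1) := han1.deriv
  set d3 := deriv d2 with hd3def
  have han3 : AnalyticOnNhd ℂ d3 (ball 0 1) := han2.deriv
  set c : ℂ := 1 - 2*(α:ℂ) with hcdef
  set N : ℂ → ℂ := fun z => f z - z * d1 z with hNdef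
  set Dd : ℂ → ℂ := fun z => f z + c * (z * d1 z) with hDdef
  have hanN : AnalyticOnNhd ℂ N (ball 0 1) := han.sub (analyticOnNhd_id.mul han1)
  have hanD : AnalyticOnNhd ℂ Dd (ball 0 1) :=
    han.add (analyticOnNhd_const.mul (analyticOnNhd_id.mul han1))
  -- derivative identities
  have hdN : ∀ z ∈ ball (0:ℂ) 1, deriv N z = -(z * d2 z) := by
    intro z hz
    have hf1 : HasDerivAt f (d1 z) z := (han z hz).differentiableAt.hasDerivAt
    have hf2 : HasDerivAt d1 (d2 z) z := (han1 z hz).differentiableAt.hasDerivAt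
    have : HasDerivAt N (d1 z - (1 * d1 z + z * d2 z)) z := hf1.sub ((hasDerivAt_id z).mul hf2)
    rw [this.deriv]; ring
  have hdD : ∀ z ∈ ball (0:ℂ) 1, deriv Dd z = d1 z + c * (1 * d1 z + z * d2 z) := by
    intro z hz
    have hf1 : HasDerivAt f (d1 z) z := (han z hz).differentiableAt.hasDerivAt
    have hf2 : HasDerivAt d1 (d2 z) z := (han1 z hz).differentiableAt.hasDerivAt
    have : HasDerivAt Dd (d1 z + c * (1 * d1 z + z * d2 z)) z :=
      hf1.add (((hasDerivAt_id z).mul hf2).const_mul c)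
    exact this.deriv
  -- values at 0
  have N0 : N 0 = 0 := by simp [hNdef, h0]
  have D0 : Dd 0 = 0 := by simp [hDdef, h0]
  have dN0 : deriv N 0 = 0 := by rw [hdN 0 h0mem]; simp
  have dD0 : deriv Dd 0 = 1 + c := by rw [hdD 0 h0mem]; simp [← hd1def, h1]
  -- iterated derivatives
  have iN2 : iteratedDeriv 2 N 0 = -(d2 0) := by
    have e1 : deriv N =ᶠ[nhds (0:ℂ)] fun z => -(z * d2 z) :=
      Filter.eventually_of_mem hball hdN
    rw [show (2:ℕ) = 1 + 1 from rfl, iteratedDeriv_succ, iteratedDeriv_one, e1.deriv_eq]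
    have hf3 : HasDerivAt d2 (d3 0) 0 := (han2 0 h0mem).differentiableAt.hasDerivAt
    have : HasDerivAt (fun z => -(z * d2 z)) (-(1 * d2 0 + 0 * d3 0)) 0 :=
      ((hasDerivAt_id 0).mul hf3).neg
    rw [this.deriv]; ring
  have iN3 : iteratedDeriv 3 N 0 = -(2 * d3 0) := by
    have e1 : deriv N =ᶠ[nhds (0:ℂ)] fun z => -(z * d2 z) :=
      Filter.eventually_of_mem hball hdN
    have e2 : deriv (deriv N) =ᶠ[nhds (0:ℂ)] fun z => -(1 * d2 z + z * d3 z) := by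
      refine e1.deriv.trans ?_
      filter_upwards [hball] with z hz
      have hf3 : HasDerivAt d2 (d3 z) z := (han2 z hz).differentiableAt.hasDerivAt
      exact (((hasDerivAt_id z).mul hf3).neg).deriv
    rw [show (3:ℕ) = 1 + 1 + 1 from rfl, iteratedDeriv_succ, iteratedDeriv_succ,
      iteratedDeriv_one, e2.deriv_eq]
    have hf3 : HasDerivAt d3 (deriv d3 0) 0 := (han3 0 h0mem).differentiableAt.hasDerivAt
    have hf2 : HasDerivAt d2 (d3 0) 0 := (han2 0 h0mem).differentiableAt.hasDerivAt
    have : HasDerivAt (fun z => -(1 * d2 z + z * d3 z))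
        (-(1 * d3 0 + (1 * d3 0 + 0 * deriv d3 0))) 0 :=
      ((hf2.const_mul 1).add ((hasDerivAt_id 0).mul hf3)).neg
    rw [this.deriv]; ring
  have iD2 : iteratedDeriv 2 Dd 0 = (1 + 2*c) * d2 0 := by
    have e1 : deriv Dd =ᶠ[nhds (0:ℂ)] fun z => d1 z + c * (1 * d1 z + z * d2 z) :=
      Filter.eventually_of_mem hball hdD
    rw [show (2:ℕ) = 1 + 1 from rfl, iteratedDeriv_succ, iteratedDeriv_one, e1.deriv_eq]
    have hf2 : HasDerivAt d1 (d2 0) 0 := (han1 0 h0mem).differentiableAt.hasDerivAt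
    have hf3 : HasDerivAt d2 (d3 0) 0 := (han2 0 h0mem).differentiableAt.hasDerivAt
    have : HasDerivAt (fun z => d1 z + c * (1 * d1 z + z * d2 z))
        (d2 0 + c * (1 * d2 0 + (1 * d2 0 + 0 * d3 0))) 0 :=
      hf2.add (((hf2.const_mul 1).add ((hasDerivAt_id 0).mul hf3)).const_mul c)
    rw [this.deriv]; ring
  -- power series
  obtain ⟨pN, hpN⟩ : AnalyticAt ℂ N 0 := hanN 0 h0mem
  obtain ⟨pD, hpD⟩ : AnalyticAt ℂ Dd 0 := hanD 0 h0mem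
  have cN2 : pN.coeff 2 = -(d2 0) / 2 := by
    rw [coeff_eq_iteratedDeriv hpN 2, iN2]
    norm_num [Nat.factorial]
  have cN3 : pN.coeff 3 = -(2 * d3 0) / 6 := by
    rw [coeff_eq_iteratedDeriv hpN 3, iN3]
    norm_num [Nat.factorial]
  have cD1 : pD.coeff 1 = 1 + c := by
    rw [coeff_eq_iteratedDeriv hpD 1, iteratedDeriv_one, dD0]; norm_num
  have cD2 : pD.coeff 2 = (1 + 2*c) * d2 0 / 2 := by
    rw [coeff_eq_iteratedDeriv hpD 2, iD2]
    norm_num [Nat.factorial]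
  -- dslope functions
  set M : ℂ → ℂ := dslope (dslope N 0) 0 with hMdef
  set E : ℂ → ℂ := dslope Dd 0 with hEdef
  have hMs : HasFPowerSeriesAt M pN.fslope.fslope 0 :=
    (hpN.has_fpower_series_dslope_fslope).has_fpower_series_dslope_fslope
  have hEs : HasFPowerSeriesAt E pD.fslope 0 := hpD.has_fpower_series_dslope_fslope
  have M0 : M 0 = pN.coeff 2 := by
    have := coeff_eq_iteratedDeriv hMs 0
    simpa using this.symm
  have M'0 : deriv M 0 = pN.coeff 3 := by
    have := hMs.deriv
    simpa using this
  have E0 : E 0 = 1 + c := by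
    have := coeff_eq_iteratedDeriv hEs 0
    simp only [FormalMultilinearSeries.coeff_fslope, iteratedDeriv_zero, Nat.factorial_zero,
      Nat.cast_one, div_one, zero_add] at this
    rw [← cD1, ← this]
  have E'0 : deriv E 0 = pD.coeff 2 := by
    have := hEs.deriv
    simpa using this
  have hE0ne : E 0 ≠ 0 := by
    rw [E0, hcdef]
    intro hcon
    have : (2:ℂ) - 2*(α:ℂ) = 0 := by linear_combination hcon
    have h2 : (α:ℂ) = 1 := by linear_combination -this/2
    exact hα1.ne (by exact_mod_cast h2)
  -- factorization identities
  have hNz : ∀ z : ℂ, N z = z^2 * M z := by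
    intro z
    have e1 := sub_smul_dslope N 0 z
    have e2 := sub_smul_dslope (dslope N 0) 0 z
    rw [sub_zero, N0, sub_zero, smul_eq_mul] at e1
    rw [sub_zero, dslope_same, dN0, sub_zero, smul_eq_mul] at e2
    rw [← e1, ← hMdef] at *
    rw [← e2]; ring
  have hDz : ∀ z : ℂ, Dd z = z * E z := by
    intro z
    have e1 := sub_smul_dslope Dd 0 z
    rw [sub_zero, D0, sub_zero, smul_eq_mul] at e1
    exact e1.symm
  -- nonvanishing of Dd off 0
  have hDdne : ∀ z ∈ ball (0:ℂ) 1, z ≠ 0 → Dd z ≠ 0 := by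
    intro z hz hz0 hcon
    have hu : z * d1 z ≠ 0 := mul_ne_zero hz0 (hf' z hz)
    have hfe : f z = -(c * (z * d1 z)) := by
      have : f z + c * (z * d1 z) = 0 := hcon
      linear_combination this
    have : f z / (z * d1 z) = -c := by rw [hfe]; field_simp [hf' z hz]
    have hre := hstar z hz hz0
    rw [this] at hre
    have : (-c).re = 2*α - 1 := by simp [hcdef]
    rw [this] at hre
    linarith
  have hEne : ∀ z ∈ ball (0:ℂ) 1, E z ≠ 0 := by
    intro z hz
    rcases eq_or_ne z 0 with rfl | hz0
    · exact hE0ne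
    · intro hcon
      exact hDdne z hz hz0 (by rw [hDz z, hcon, mul_zero])
  -- norm inequality |N| ≤ |Dd|
  have hND : ∀ z ∈ ball (0:ℂ) 1, ‖N z‖ ≤ ‖Dd z‖ := by
    intro z hz
    rcases eq_or_ne z 0 with rfl | hz0
    · rw [N0, D0]
    · have hu : z * d1 z ≠ 0 := mul_ne_zero hz0 (hf' z hz)
      set w : ℂ := f z / (z * d1 z) with hwdef
      have hwre : α ≤ w.re := hstar z hz hz0
      have hNe : N z = (z * d1 z) * (w - 1) := by
        show f z - z * d1 z = _; rw [hwdef, mul_sub, mul_div_cancel₀ _ hu]; ring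
      have hDe : Dd z = (z * d1 z) * (w + c) := by
        show f z + c * (z * d1 z) = _; rw [hwdef, mul_add, mul_div_cancel₀ _ hu]; ring
      have hsq : Complex.normSq (w - 1) ≤ Complex.normSq (w + c) := by
        simp only [Complex.normSq_apply, Complex.sub_re, Complex.sub_im, Complex.add_re,
          Complex.add_im, Complex.one_re, Complex.one_im, hcdef, Complex.mul_re, Complex.mul_im,
          Complex.ofReal_re, Complex.ofReal_im, Complex.re_ofNat, Complex.im_ofNat]
        nlinarith [hwre, hα0, hα1, mul_nonneg (sub_nonneg.2 hwre) (by linarith : (0:ℝ) ≤ 1 - α)]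
      have hwle : ‖w - 1‖ ≤ ‖w + c‖ := by
        have := Real.sqrt_le_sqrt hsq
        simpa [Complex.norm_def] using this
      rw [hNe, hDe]
      calc ‖(z * d1 z) * (w - 1)‖
          = ‖z * d1 z‖ * ‖w - 1‖ := norm_mul _ _
        _ ≤ ‖z * d1 z‖ * ‖w + c‖ :=
            mul_le_mul_of_nonneg_left hwle (norm_nonneg _)
        _ = ‖(z * d1 z) * (w + c)‖ := (norm_mul _ _).symm
  -- differentiability
  have hdM : DifferentiableOn ℂ M (ball 0 1) :=
    (differentiableOn_dslope hball).2 ((differentiableOn_dslope hball).2 hanN.differentiableOn)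
  have hdE : DifferentiableOn ℂ E (ball 0 1) :=
    (differentiableOn_dslope hball).2 hanD.differentiableOn
  clear_value M E
  clear hMs hEs
  set H : ℂ → ℂ := fun z => M z / E z with hHdef
  have hdH : DifferentiableOn ℂ H (ball 0 1) := hdM.div hdE hEne
  -- |z * H z| ≤ 1 on the ball
  have hQ : ∀ z ∈ ball (0:ℂ) 1, ‖z * H z‖ ≤ 1 := by
    intro z hz
    have hE := hEne z hz
    have key : Dd z * (z * H z) = N z := by
      rw [hHdef, hDz z, hNz z]; field_simp
    rcases eq_or_ne z 0 with rfl | hz0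
    · simp
    · have hD := hDdne z hz hz0
      have h2 : ‖Dd z‖ * ‖z * H z‖ ≤ ‖Dd z‖ * 1 := by
        rw [← norm_mul, key, mul_one]; exact hND z hz
      exact le_of_mul_le_mul_left h2 (norm_pos_iff.2 hD)
  -- |H| ≤ 1 on the ball
  have hH1 : ∀ z ∈ ball (0:ℂ) 1, ‖H z‖ ≤ 1 := by
    have main : ∀ ρ : ℝ, ∀ z ∈ ball (0:ℂ) 1, ‖z‖ < ρ → ρ < 1 →
        ‖H z‖ ≤ 1/ρ := by
      intro ρ z hz hzρ hρ1
      have hρ0 : 0 < ρ := lt_of_le_of_lt (norm_nonneg _) hzρ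
      have hsub : closedBall (0:ℂ) ρ ⊆ ball (0:ℂ) 1 := by
        intro x hx
        rw [mem_closedBall_zero_iff] at hx
        rw [mem_ball_zero_iff]
        exact lt_of_le_of_lt hx hρ1
      have hdc : DiffContOnCl ℂ H (ball (0:ℂ) ρ) := by
        refine DifferentiableOn.diffContOnCl ?_
        rw [closure_ball (0:ℂ) hρ0.ne']
        exact hdH.mono hsub
      have := Complex.norm_le_of_forall_mem_frontier_norm_le isBounded_ball hdc
        (C := 1/ρ) ?_ (z := z) ?_
      · simpa using this
      · intro x hx
        rw [frontier_ball (0:ℂ) hρ0.ne'] at hx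
        rw [mem_sphere_zero_iff_norm] at hx
        have hxball : x ∈ ball (0:ℂ) 1 := by
          rw [mem_ball_zero_iff, hx]; exact hρ1
        have := hQ x hxball
        rw [norm_mul] at this
        have hax : ‖x‖ = ρ := hx
        rw [hax] at this
        show ‖H x‖ ≤ 1/ρ
        rw [le_div_iff₀ hρ0]
        linarith [this]
      · rw [closure_ball (0:ℂ) hρ0.ne', mem_closedBall_zero_iff]
        exact le_of_lt hzρ
    intro z hz
    by_contra hcon
    push_neg at hcon
    set ρ : ℝ := (max (‖z‖) (1/‖H z‖) + 1)/2 with hρdef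
    have hH0 : 0 < ‖H z‖ := lt_trans one_pos hcon
    have h1ρ : 1/‖H z‖ < 1 := by
      rw [div_lt_one hH0]; exact hcon
    have hzlt : ‖z‖ < 1 := mem_ball_zero_iff.1 hz
    have hmax1 : max (‖z‖) (1/‖H z‖) < 1 := max_lt hzlt h1ρ
    have hρ1 : ρ < 1 := by rw [hρdef]; linarith
    have hzρ : ‖z‖ < ρ := by
      rw [hρdef]
      have := le_max_left (‖z‖) (1/‖H z‖)
      linarith
    have hinvρ : 1/‖H z‖ < ρ := by
      rw [hρdef]
      have := le_max_right (‖z‖) (1/‖H z‖)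
      linarith
    have hρ0 : 0 < ρ := lt_of_le_of_lt (norm_nonneg _) hzρ
    have hle := main ρ z hz hzρ hρ1
    rw [div_lt_iff₀ hH0] at hinvρ
    rw [le_div_iff₀ hρ0] at hle
    nlinarith
  -- Schwarz-Pick at 0
  have hw1 : ‖H 0‖ ≤ 1 := hH1 0 h0mem
  have key : ‖(H 0)^2 - deriv H 0‖ ≤ 1 := by
    by_cases habs : ‖H 0‖ = 1
    · -- maximum at interior point: H constant
      have hmax : IsMaxOn (norm ∘ H) (ball (0:ℂ) 1) 0 := by
        intro x hx
        simp only [Function.comp_apply]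
        show ‖H x‖ ≤ ‖H 0‖
        have : ‖H x‖ ≤ 1 := hH1 x hx
        have h2 : ‖H 0‖ = 1 := habs
        rw [h2]; exact this
      have heq : Set.EqOn H (Function.const ℂ (H 0)) (ball (0:ℂ) 1) :=
        Complex.eqOn_of_isPreconnected_of_isMaxOn_norm (convex_ball _ _).isPreconnected
          isOpen_ball hdH h0mem hmax
      have hderiv0 : deriv H 0 = 0 := by
        have hev : H =ᶠ[nhds (0:ℂ)] Function.const ℂ (H 0) :=
          Filter.eventually_of_mem hball heq
        rw [hev.deriv_eq]
        exact deriv_const 0 (H 0)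
      rw [hderiv0, sub_zero, norm_pow, habs]; norm_num
    · have hlt : ‖H 0‖ < 1 := lt_of_le_of_ne hw1 habs
      have hHlt : ∀ z ∈ ball (0:ℂ) 1, ‖H z‖ < 1 := by
        intro z hz
        rcases lt_or_eq_of_le (hH1 z hz) with h | h
        · exact h
        · exfalso
          have hmax : IsMaxOn (norm ∘ H) (ball (0:ℂ) 1) z := by
            intro x hx
            show ‖H x‖ ≤ ‖H z‖
            have h2 : ‖H z‖ = 1 := h
            rw [h2]; exact hH1 x hx
          have heq : Set.EqOn H (Function.const ℂ (H z)) (ball (0:ℂ) 1) :=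
            Complex.eqOn_of_isPreconnected_of_isMaxOn_norm (convex_ball _ _).isPreconnected
              isOpen_ball hdH hz hmax
          have := heq h0mem
          rw [this] at habs
          exact habs h
      set w : ℂ := H 0 with hwdef
      set Φ : ℂ → ℂ := fun z => (H z - w) / (1 - (starRingEnd ℂ) w * H z) with hΦdef
      have hden : ∀ z ∈ ball (0:ℂ) 1, 1 - (starRingEnd ℂ) w * H z ≠ 0 := by
        intro z hz hcon
        have h2 : (starRingEnd ℂ) w * H z = 1 := by linear_combination -hcon
        have h3 : ‖(starRingEnd ℂ) w * H z‖ = 1 := by rw [h2]; simp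
        rw [norm_mul, Complex.norm_conj] at h3
        have h4 : ‖w‖ * ‖H z‖ < 1 := by
          rcases eq_or_lt_of_le (norm_nonneg w) with hw0 | hw0
          · rw [← hw0]; norm_num
          · calc ‖w‖ * ‖H z‖ < ‖w‖ * 1 :=
                  (mul_lt_mul_iff_right₀ hw0).2 (hHlt z hz)
              _ < 1 := by rw [mul_one]; exact hlt
        rw [h3] at h4; exact lt_irrefl _ h4
      have hΦd : DifferentiableOn ℂ Φ (ball (0:ℂ) 1) :=
        (hdH.sub (differentiableOn_const w)).div
          ((differentiableOn_const 1).sub ((differentiableOn_const _).mul hdH)) hden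
      have hΦ0 : Φ 0 = 0 := by simp [hΦdef, ← hwdef]
      have hmaps : Set.MapsTo Φ (ball (0:ℂ) 1) (ball (Φ 0) 1) := by
        rw [hΦ0]
        intro z hz
        rw [mem_ball_zero_iff]
        have hu : ‖H z‖ < 1 := hHlt z hz
        have hdenz := hden z hz
        have hsq : Complex.normSq (H z - w) < Complex.normSq (1 - (starRingEnd ℂ) w * H z) := by
          have hid : Complex.normSq (1 - (starRingEnd ℂ) w * H z) - Complex.normSq (H z - w)
              = (1 - Complex.normSq w) * (1 - Complex.normSq (H z)) := by
            simp only [Complex.normSq_apply, Complex.sub_re, Complex.sub_im, Complex.mul_re,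
              Complex.mul_im, Complex.one_re, Complex.one_im, Complex.conj_re, Complex.conj_im]
            ring
          have hw2 : Complex.normSq w < 1 := by
            rw [← Complex.sq_norm]; nlinarith [hlt, norm_nonneg w]
          have hu2 : Complex.normSq (H z) < 1 := by
            rw [← Complex.sq_norm]; nlinarith [hu, norm_nonneg (H z)]
          nlinarith [hw2, hu2, hid]
        show ‖(H z - w) / (1 - (starRingEnd ℂ) w * H z)‖ < 1
        rw [norm_div, div_lt_one (by
          have := Complex.normSq_pos.2 hdenz
          rw [Complex.norm_def]
          exact Real.sqrt_pos.2 this)]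
        rw [Complex.norm_def, Complex.norm_def]
        exact Real.sqrt_lt_sqrt (Complex.normSq_nonneg _) hsq
      have hSch : ‖deriv Φ 0‖ ≤ 1 := by
        have := Complex.norm_deriv_le_div_of_mapsTo_ball hΦd (hmaps.mono_right ball_subset_closedBall) one_pos
        simpa using this
      -- compute deriv Φ 0
      have hH0d : DifferentiableAt ℂ H 0 := hdH.differentiableAt hball
      have hden0 : (1 : ℂ) - (starRingEnd ℂ) w * w ≠ 0 := by
        have := hden 0 h0mem
        rwa [← hwdef] at this
      have hΦderiv : deriv Φ 0 = deriv H 0 / (1 - (starRingEnd ℂ) w * w) := by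
        have hnum : HasDerivAt (fun z => H z - w) (deriv H 0) 0 :=
          (hH0d.hasDerivAt).sub_const w
        have hdenD : HasDerivAt (fun z => 1 - (starRingEnd ℂ) w * H z)
            (0 - (starRingEnd ℂ) w * deriv H 0) 0 :=
          (hasDerivAt_const 0 (1:ℂ)).sub ((hH0d.hasDerivAt).const_mul _)
        have hdiv := hnum.div hdenD hden0
        rw [show deriv Φ 0 = _ from hdiv.deriv]
        have hw0 : H 0 - w = 0 := by rw [← hwdef]; ring
        rw [← hwdef, hw0]
        field_simp
        ring
      have hconj : (starRingEnd ℂ) w * w = (Complex.normSq w : ℂ) := by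
        rw [mul_comm, Complex.mul_conj]
      have habsden : ‖1 - (starRingEnd ℂ) w * w‖ = 1 - Complex.normSq w := by
        rw [hconj]
        have hw2 : Complex.normSq w < 1 := by
          rw [← Complex.sq_norm]; nlinarith [hlt, norm_nonneg w]
        rw [show (1 : ℂ) - (Complex.normSq w : ℂ) = ((1 - Complex.normSq w : ℝ) : ℂ) by
          push_cast; ring]
        rw [Complex.norm_real, Real.norm_of_nonneg (by linarith)]
      have hderivH : ‖deriv H 0‖ ≤ 1 - Complex.normSq w := by
        have : ‖deriv H 0‖
            = ‖deriv Φ 0‖ * ‖1 - (starRingEnd ℂ) w * w‖ := by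
          rw [← norm_mul, hΦderiv]
          congr 1
          field_simp
        rw [this, habsden]
        have h2 : (0:ℝ) ≤ 1 - Complex.normSq w := by
          rw [habsden.symm]; exact norm_nonneg _
        nlinarith [hSch, h2, norm_nonneg (deriv Φ 0)]
      calc ‖w^2 - deriv H 0‖
          ≤ ‖w^2‖ + ‖deriv H 0‖ := by
            have := norm_sub_le (w^2) (deriv H 0)
            simpa using this
        _ ≤ Complex.normSq w + (1 - Complex.normSq w) := by
            have : ‖w^2‖ = Complex.normSq w := by
              rw [norm_pow, ← Complex.sq_norm]
            rw [this]
            exact add_le_add le_rfl hderivH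
        _ = 1 := by ring
  -- final algebra
  have ia2 : iteratedDeriv 2 f 0 = d2 0 := by
    rw [show (2:ℕ) = 1+1 from rfl, iteratedDeriv_succ, iteratedDeriv_one, hd2def, hd1def]
  have ia3 : iteratedDeriv 3 f 0 = d3 0 := by
    rw [show (3:ℕ) = 1+1+1 from rfl, iteratedDeriv_succ, iteratedDeriv_succ, iteratedDeriv_one,
      hd3def, hd2def, hd1def]
  have ha2 : a 2 = d2 0 / 2 := by
    rw [ha 2, ia2]; norm_num [Nat.factorial]
  have ha3 : a 3 = d3 0 / 6 := by
    rw [ha 3, ia3]; norm_num [Nat.factorial]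
  have H0val : H 0 = (-(d2 0)/2) / (1 + c) := by
    show M 0 / E 0 = _
    rw [M0, cN2, E0]
  have hMd : DifferentiableAt ℂ M 0 := hdM.differentiableAt hball
  have hEd : DifferentiableAt ℂ E 0 := hdE.differentiableAt hball
  have derivH0 : deriv H 0 = ((-(2 * d3 0)/6) * (1 + c) - (-(d2 0)/2) * ((1 + 2*c) * d2 0 / 2))
      / (1 + c)^2 := by
    have hdiv := (hMd.hasDerivAt).div (hEd.hasDerivAt) hE0ne
    have : deriv H 0 = (deriv M 0 * E 0 - M 0 * deriv E 0) / E 0 ^ 2 := by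
      rw [hHdef]; exact hdiv.deriv
    rw [this, M'0, cN3, E'0, cD2, M0, cN2, E0]
  have hA : (1:ℂ) - (α:ℂ) ≠ 0 := by
    intro hcon
    have h2 : (α:ℂ) = 1 := by linear_combination -hcon
    exact hα1.ne (by exact_mod_cast h2)
  have h1c : (1:ℂ) + c ≠ 0 := by rw [← E0]; exact hE0ne
  have key2 : 2 * a 3 - 2 * a 2 ^ 2 + a 2 ^ 2 / (1 - (α:ℂ))
      = (2 - 2*(α:ℂ)) * ((H 0)^2 - deriv H 0) := by
    rw [ha2, ha3, H0val, derivH0, hcdef]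
    have h1c' : (1:ℂ) + (1 - 2*(α:ℂ)) ≠ 0 := by rw [hcdef] at h1c; convert h1c using 2
    field_simp
    ring
  rw [key2, norm_mul]
  have habs2 : ‖2 - 2*(α:ℂ)‖ = 2 - 2*α := by
    rw [show (2:ℂ) - 2*(α:ℂ) = ((2 - 2*α : ℝ):ℂ) by push_cast; ring, Complex.norm_real,
      Real.norm_of_nonneg (by linarith)]
  rw [habs2]
  calc (2 - 2*α) * ‖(H 0)^2 - deriv H 0‖ ≤ (2 - 2*α) * 1 :=
        mul_le_mul_of_nonneg_left key (by linarith)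
    _ = 2 * (1 - α) := by ring
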